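/- arXiv:1404.2196 — 4 statements merged into one kernel-verified Lean document; each statement's English description precedes it below -/
import Mathlib

section
/- For every positive integer j, the identity (∑_{m=0}^{2j-2} (-1)^m * C(4j, 2m+1) * (2m+1)! * (4j-2m-3)! / (m! * (2j)! * (2j-m-2)! * 2^{4j-2})) - (4j)! / ((2j-1)! * (2j)! * 2^{4j-1}) = -1 holds. -/
/-!
With `n = 2j - 1`, each summand is `T = (4j)! / ((2j-1)! (2j)! 2^(4j-1))` times
`(-1)^m C(n,m) / (2(n-m)+1)`, and since `n` is odd the subtracted term is the `m = n` instance of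
the same expression. Reflecting `m ↦ n - m`, the completed sum becomes
`-∑ₖ (-1)^k C(n,k) / (2k+1)`, and `∑ₖ (-1)^k C(n,k) / (2k+1) = 2^n n! / (2n+1)‼` is the
partial fraction expansion `∑ₖ (-1)^k C(n,k) / (a+k) = n! / ∏_{i ≤ n} (a+i)` at `a = 1/2`.
Finally `(4j)! = 4j (2n+1)‼ 2^n n!` gives `T 2^n n! / (2n+1)‼ = 1`.
-/

open Finset Nat

section
variable {K : Type*} [Field K]

theorem sum_neg_one_pow_mul_choose_div_add_succ (n : ℕ) (a : K) :
    ∑ k ∈ range (n + 2), (-1) ^ k * ((n + 1).choose k : K) / (a + k) =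
      ∑ k ∈ range (n + 1), (-1) ^ k * (n.choose k : K) / (a + k) -
        ∑ k ∈ range (n + 1), (-1) ^ k * (n.choose k : K) / (a + 1 + k) := by
  calc _ = ∑ k ∈ range (n + 2), ((n + 1).choose k : K) * ((-1) ^ k / (a + k)) :=
        sum_congr rfl fun _ _ => by ring
    _ = _ := sum_choose_succ_mul (fun k _ => (-1) ^ k / (a + k)) n
    _ = _ := by
      rw [sub_eq_add_neg, ← sum_neg_distrib]
      congr 1 <;> refine sum_congr rfl fun k _ => ?_ <;> push_cast <;> ring

theorem sum_neg_one_pow_mul_choose_div_add (n : ℕ) (a : K) (ha : ∀ i ≤ n, a + i ≠ 0) :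
    ∑ k ∈ range (n + 1), (-1) ^ k * (n.choose k : K) / (a + k) =
      n ! / ∏ i ∈ range (n + 1), (a + i) := by
  induction n generalizing a with
  | zero => simp
  | succ n ih =>
    have ha₀ : a ≠ 0 := by simpa using ha 0 (Nat.zero_le _)
    have ha' : ∀ i ≤ n, a + i ≠ 0 := fun i hi => ha i (by omega)
    have ha₁ : ∀ i ≤ n, a + 1 + i ≠ 0 := fun i hi => by
      simpa [add_assoc, add_comm (1 : K)] using ha (i + 1) (by omega)
    have hprod : ∀ b : K, (∀ i ≤ n, b + i ≠ 0) → ∏ i ∈ range (n + 1), (b + i) ≠ 0 :=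
      fun b hb => prod_ne_zero_iff.2 fun i hi => hb i (Nat.lt_succ_iff.1 (mem_range.1 hi))
    have hshift : ∏ i ∈ range (n + 2), (a + i) = a * ∏ i ∈ range (n + 1), (a + 1 + i) := by
      rw [prod_range_succ', mul_comm]; push_cast; simp only [add_assoc, add_comm (1 : K)]; simp
    have hlast :
        ∏ i ∈ range (n + 2), (a + i) = (∏ i ∈ range (n + 1), (a + i)) * (a + (n + 1)) := by
      rw [prod_range_succ]; push_cast; rfl
    rw [sum_neg_one_pow_mul_choose_div_add_succ, ih a ha', ih (a + 1) ha₁,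
      div_sub_div _ _ (hprod a ha') (hprod _ ha₁),
      div_eq_div_iff (mul_ne_zero (hprod a ha') (hprod _ ha₁))
        (by rw [hshift]; exact mul_ne_zero ha₀ (hprod _ ha₁)),
      factorial_succ]
    push_cast
    linear_combination (n ! : K) * (∏ i ∈ range (n + 1), (a + 1 + i)) * hlast
      - (n ! : K) * (∏ i ∈ range (n + 1), (a + i)) * hshift

theorem prod_half_add_natCast [CharZero K] (n : ℕ) :
    ∏ i ∈ range (n + 1), ((1 / 2 : K) + i) = (2 * n + 1)‼ / 2 ^ (n + 1) := by
  induction n with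
  | zero => norm_num
  | succ n ih =>
    rw [prod_range_succ, ih, show 2 * (n + 1) + 1 = 2 * n + 1 + 2 by ring, doubleFactorial_add_two]
    push_cast
    field_simp
    ring

theorem sum_neg_one_pow_mul_choose_div_two_mul_add_one [CharZero K] (n : ℕ) :
    ∑ k ∈ range (n + 1), (-1) ^ k * (n.choose k : K) / (2 * k + 1) =
      2 ^ n * n ! / (2 * n + 1)‼ := by
  have htwo : (2 : K) ≠ 0 := two_ne_zero
  have hodd : ((2 * n + 1)‼ : K) ≠ 0 := Nat.cast_ne_zero.2 (doubleFactorial_pos _).ne'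
  have hhalf : ∀ i ≤ n, (1 / 2 : K) + i ≠ 0 := fun i _ => by
    rw [show (1 / 2 : K) + i = (2 * i + 1 : ℕ) / 2 by push_cast; ring]
    exact div_ne_zero (Nat.cast_ne_zero.2 (2 * i).succ_ne_zero) htwo
  calc _ = (∑ k ∈ range (n + 1), (-1) ^ k * (n.choose k : K) / (1 / 2 + k)) / 2 := by
        rw [sum_div]
        refine sum_congr rfl fun k _ => ?_
        field_simp
        ring
    _ = _ := by
      rw [sum_neg_one_pow_mul_choose_div_add n _ hhalf, prod_half_add_natCast, pow_succ]
      field_simp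

theorem sum_neg_one_pow_mul_choose_div_two_mul_sub_add_one [CharZero K] (n : ℕ) :
    ∑ m ∈ range (n + 1), (-1) ^ m * (n.choose m : K) / (2 * ((n - m : ℕ) : K) + 1) =
      (-1) ^ n * (2 ^ n * n ! / (2 * n + 1)‼) := by
  rw [← sum_neg_one_pow_mul_choose_div_two_mul_add_one, mul_sum, ← sum_range_reflect]
  refine sum_congr rfl fun k hk => ?_
  have hk : k ≤ n := Nat.lt_succ_iff.1 (mem_range.1 hk)
  rw [add_tsub_cancel_right, Nat.sub_sub_self hk, choose_symm hk, pow_sub₀ _ (by norm_num) hk,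
    ← inv_pow, inv_neg_one]
  ring

end

theorem neg_one_pow_mul_choose_mul_factorial_div_eq (j m : ℕ) (hm : m + 2 ≤ 2 * j) :
    (-1 : ℚ) ^ m * (Nat.choose (4 * j) (2 * m + 1)) *
        ((Nat.factorial (2 * m + 1)) * (Nat.factorial (4 * j - 2 * m - 3)) /
          ((Nat.factorial m) * (Nat.factorial (2 * j)) *
            (Nat.factorial (2 * j - m - 2)) * 2 ^ (4 * j - 2))) =
      (4 * j)! / ((2 * j - 1)! * (2 * j)! * 2 ^ (4 * j - 1)) *
        ((-1) ^ m * ((2 * j - 1).choose m : ℚ) / (2 * ((2 * j - 1 - m : ℕ) : ℚ) + 1)) := by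
  obtain ⟨t, ht⟩ : ∃ t, 2 * j = m + t + 2 := ⟨2 * j - m - 2, by omega⟩
  rw [show 4 * j = 2 * m + 2 * t + 4 by omega, ht,
    show 2 * m + 2 * t + 4 - 2 * m - 3 = 2 * t + 1 by omega, show m + t + 2 - m - 2 = t by omega,
    show m + t + 2 - 1 = m + t + 1 by omega, show m + t + 1 - m = t + 1 by omega,
    show 2 * m + 2 * t + 4 - 2 = 2 * (m + t + 1) by omega,
    show 2 * m + 2 * t + 4 - 1 = 2 * (m + t + 1) + 1 by omega,
    Nat.cast_choose ℚ (show 2 * m + 1 ≤ 2 * m + 2 * t + 4 by omega),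
    Nat.cast_choose ℚ (show m ≤ m + t + 1 by omega),
    show 2 * m + 2 * t + 4 - (2 * m + 1) = 2 * t + 1 + 2 by omega,
    show m + t + 1 - m = t + 1 by omega]
  simp only [factorial_succ]
  push_cast
  field_simp
  ring

theorem factorial_four_mul_div_mul_eq_one (j : ℕ) (hj : 0 < j) :
    ((4 * j)! / ((2 * j - 1)! * (2 * j)! * 2 ^ (4 * j - 1)) : ℚ) *
      (2 ^ (2 * j - 1) * (2 * j - 1)! / (2 * (2 * j - 1) + 1)‼) = 1 := by
  obtain ⟨n, rfl⟩ : ∃ n, j = n + 1 := ⟨j - 1, by omega⟩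
  have hfact : (4 * (n + 1))! =
      (4 * n + 4) * ((2 * (2 * n + 1) + 1)‼ * (2 ^ (2 * n + 1) * (2 * n + 1)!)) := by
    rw [show 4 * (n + 1) = (2 * (2 * n + 1) + 1) + 1 by ring, factorial_succ,
      factorial_eq_mul_doubleFactorial, doubleFactorial_two_mul]
    ring
  rw [hfact, show 2 * (n + 1) - 1 = 2 * n + 1 by omega,
    show 4 * (n + 1) - 1 = 2 * (2 * n + 1) + 1 by omega,
    show 2 * (n + 1) = 2 * n + 1 + 1 by ring, factorial_succ (2 * n + 1)]
  have hodd : ((2 * (2 * n + 1) + 1)‼ : ℚ) ≠ 0 :=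
    Nat.cast_ne_zero.2 (doubleFactorial_pos _).ne'
  push_cast
  field_simp
  ring

theorem combinatorial_identity (j : ℕ) (hj : 0 < j) :
    (∑ m ∈ Finset.range (2 * j - 1),
        (-1 : ℚ) ^ m * (Nat.choose (4 * j) (2 * m + 1)) *
          ((Nat.factorial (2 * m + 1)) * (Nat.factorial (4 * j - 2 * m - 3)) /
            ((Nat.factorial m) * (Nat.factorial (2 * j)) *
              (Nat.factorial (2 * j - m - 2)) * 2 ^ (4 * j - 2))))
      - (Nat.factorial (4 * j) : ℚ) /
          ((Nat.factorial (2 * j - 1)) * (Nat.factorial (2 * j)) * 2 ^ (4 * j - 1))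
      = -1 := by
  rw [sum_congr rfl fun m hm => neg_one_pow_mul_choose_mul_factorial_div_eq j m
    (by have := mem_range.1 hm; omega), ← mul_sum]
  have hsum := sum_neg_one_pow_mul_choose_div_two_mul_sub_add_one (K := ℚ) (2 * j - 1)
  rw [sum_range_succ, Nat.sub_self, choose_self, Odd.neg_one_pow ⟨j - 1, by omega⟩] at hsum
  linear_combination
    (4 * j)! / ((2 * j - 1)! * (2 * j)! * 2 ^ (4 * j - 1) : ℚ) * hsum -
      factorial_four_mul_div_mul_eq_one j hj
end

section
/- For every positive integer j, the definite integral ∫_0^1 F_j(x) dx = r - π/4 for some rational number r, where F_j(x) = ∑_{m=0}^{2j-1} (-1)^m C(4j, 2m+1) x^{2m+2}/(x^2+1)^{2j+1}; in particular ∫_0^1 F_j(x) dx ≠ 0. -/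
open Real intervalIntegral Finset

/-!
Substitute `x = tan θ`. The binomial sum is `Im (1 + i tan θ) ^ (4j) = sin (4jθ) / cos θ ^ (4j)`,
so the integral becomes `∫₀^{π/4} tan θ · sin (4jθ) dθ`. Since
`tan θ · (sin (2(N+2)θ) + sin (2(N+1)θ)) = cos (2(N+1)θ) - cos (2(N+2)θ)`, a primitive `Φ_N` of
`tan θ · sin (2Nθ)` is obtained recursively, and for `N ≥ 1` it is `(-1)^(N+1) θ` plus a rational
combination of the `sin (2kθ) / k`. At `θ = π/4` these sines are `0` or `±1`, so the integral is
`r - π/4` with `r` rational, which is nonzero because `π` is irrational.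
-/

theorem Finset.sum_range_two_mul {M : Type*} [AddCommMonoid M] (n : ℕ) (f : ℕ → M) :
    ∑ i ∈ range (2 * n), f i = ∑ i ∈ range n, f (2 * i) + ∑ i ∈ range n, f (2 * i + 1) := by
  induction n with
  | zero => simp
  | succ n ih =>
    rw [show 2 * (n + 1) = 2 * n + 1 + 1 by ring, sum_range_succ, sum_range_succ, ih,
      sum_range_succ, sum_range_succ]
    abel

theorem im_one_add_mul_I_pow_two_mul (x : ℝ) (N : ℕ) :
    ((1 + x * Complex.I) ^ (2 * N)).im =
      ∑ m ∈ range N, (-1) ^ m * ((2 * N).choose (2 * m + 1) : ℝ) * x ^ (2 * m + 1) := by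
  have h_pow (i : ℕ) : (x * Complex.I) ^ (2 * i) = ((-1) ^ i * x ^ (2 * i) : ℝ) := by
    rw [mul_pow, pow_mul Complex.I, Complex.I_sq]; push_cast; ring
  have h_even (i : ℕ) : ((x * Complex.I) ^ (2 * i) * (2 * N).choose (2 * i)).im = 0 := by
    rw [h_pow, ← Complex.ofReal_natCast, ← Complex.ofReal_mul, Complex.ofReal_im]
  have h_odd (i : ℕ) : ((x * Complex.I) ^ (2 * i + 1) * (2 * N).choose (2 * i + 1)).im =
      (-1) ^ i * ((2 * N).choose (2 * i + 1) : ℝ) * x ^ (2 * i + 1) := by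
    have : (x * Complex.I) ^ (2 * i + 1) * (2 * N).choose (2 * i + 1) =
        ((-1) ^ i * ((2 * N).choose (2 * i + 1) : ℝ) * x ^ (2 * i + 1) : ℝ) * Complex.I := by
      rw [pow_succ, h_pow]; push_cast; ring
    rw [this, Complex.mul_I_im, Complex.ofReal_re]
  rw [add_comm, add_pow, sum_range_succ, Finset.sum_range_two_mul]
  simp only [one_pow, mul_one, Complex.add_im, Complex.im_sum, h_even, h_odd, sum_const_zero,
    zero_add, add_zero]

theorem one_add_tan_mul_I {θ : ℝ} (hθ : cos θ ≠ 0) :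
    1 + tan θ * Complex.I = Complex.exp (θ * Complex.I) / cos θ := by
  have : Complex.cos θ ≠ 0 := by rw [← Complex.ofReal_cos]; exact_mod_cast hθ
  rw [Complex.exp_mul_I, Complex.ofReal_tan, Complex.tan, Complex.ofReal_cos]
  field_simp

theorem im_one_add_tan_mul_I_pow {θ : ℝ} (hθ : cos θ ≠ 0) (n : ℕ) :
    ((1 + tan θ * Complex.I) ^ n).im = sin (n * θ) / cos θ ^ n := by
  rw [one_add_tan_mul_I hθ, div_pow, ← Complex.exp_nat_mul, ← mul_assoc,
    ← Complex.ofReal_pow, Complex.div_ofReal_im, ← Complex.ofReal_natCast, ← Complex.ofReal_mul,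
    Complex.exp_ofReal_mul_I_im]

theorem sum_choose_odd_mul_pow_div_eq (N : ℕ) (x : ℝ) :
    ∑ m ∈ range N, (-1 : ℝ) ^ m * ((2 * N).choose (2 * m + 1) : ℝ) * x ^ (2 * m + 2) /
        (x ^ 2 + 1) ^ (N + 1) = x * sin (2 * N * arctan x) / (1 + x ^ 2) := by
  have h := im_one_add_tan_mul_I_pow (cos_arctan_pos x).ne' (2 * N)
  rw [tan_arctan, im_one_add_mul_I_pow_two_mul, pow_mul, cos_sq_arctan, one_div, inv_pow,
    div_inv_eq_mul] at h
  calc _ = x / (x ^ 2 + 1) ^ (N + 1) *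
        ∑ m ∈ range N, (-1 : ℝ) ^ m * ((2 * N).choose (2 * m + 1) : ℝ) * x ^ (2 * m + 1) := by
        rw [mul_sum]; congr! 1 with m; ring
    _ = _ := by
      rw [h]; push_cast; field_simp; ring

theorem tan_mul_sin_add_sin {θ : ℝ} (hθ : cos θ ≠ 0) (a : ℝ) :
    tan θ * (sin (a + θ) + sin (a - θ)) = cos (a - θ) - cos (a + θ) := by
  rw [tan_eq_sin_div_cos, div_mul_eq_mul_div, div_eq_iff hθ, sin_add, sin_sub, cos_add, cos_sub]
  ring

noncomputable def tanMulSinPrimitive : ℕ → ℝ → ℝ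
  | 0, _ => 0
  | 1, θ => θ - sin (2 * θ) / 2
  | N + 2, θ => sin (2 * (N + 1) * θ) / (2 * (N + 1)) - sin (2 * (N + 2) * θ) / (2 * (N + 2))
      - tanMulSinPrimitive (N + 1) θ

theorem hasDerivAt_sin_mul_div {c : ℝ} (hc : c ≠ 0) (θ : ℝ) :
    HasDerivAt (fun t => sin (c * t) / c) (cos (c * θ)) θ := by
  simpa [hc] using (((hasDerivAt_id θ).const_mul c).sin).div_const c

theorem hasDerivAt_tanMulSinPrimitive (N : ℕ) {θ : ℝ} (hθ : cos θ ≠ 0) :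
    HasDerivAt (tanMulSinPrimitive N) (tan θ * sin (2 * N * θ)) θ := by
  induction N, θ using tanMulSinPrimitive.induct with
  | case1 θ => simpa [tanMulSinPrimitive] using hasDerivAt_const θ (0 : ℝ)
  | case2 θ =>
    refine ((hasDerivAt_id' θ).sub (hasDerivAt_sin_mul_div two_ne_zero θ)).congr_deriv ?_
    rw [tan_eq_sin_div_cos, Nat.cast_one, mul_one, cos_two_mul_eq_one_sub, sin_two_mul]
    field_simp; ring
  | case3 N θ ih =>
    have hN1 : (2 * (N + 1) : ℝ) ≠ 0 := by positivity
    have hN2 : (2 * (N + 2) : ℝ) ≠ 0 := by positivity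
    refine (((hasDerivAt_sin_mul_div hN1 θ).sub (hasDerivAt_sin_mul_div hN2 θ)).sub
      (ih hθ)).congr_deriv ?_
    have key := tan_mul_sin_add_sin hθ ((2 * N + 3) * θ)
    rw [show (2 * N + 3) * θ + θ = 2 * (N + 2) * θ by ring,
      show (2 * N + 3) * θ - θ = 2 * (N + 1) * θ by ring] at key
    push_cast
    rw [show (N : ℝ) + 1 + 1 = N + 2 by ring]
    linear_combination -key

theorem hasDerivAt_tanMulSinPrimitive_arctan (N : ℕ) (x : ℝ) :
    HasDerivAt (fun x => tanMulSinPrimitive N (arctan x))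
      (x * sin (2 * N * arctan x) / (1 + x ^ 2)) x := by
  have h := (hasDerivAt_tanMulSinPrimitive N (cos_arctan_pos x).ne').comp x (hasDerivAt_arctan x)
  rwa [tan_arctan, mul_one_div] at h

theorem tanMulSinPrimitive_zero_right : ∀ N, tanMulSinPrimitive N 0 = 0
  | 0 => rfl
  | 1 => by simp [tanMulSinPrimitive]
  | N + 2 => by simp [tanMulSinPrimitive, tanMulSinPrimitive_zero_right (N + 1)]

theorem exists_rat_sin_nat_mul_pi_div_two (k : ℕ) : ∃ q : ℚ, sin (k * (π / 2)) = q := by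
  obtain ⟨m, rfl | rfl⟩ := Nat.even_or_odd' k
  · refine ⟨0, ?_⟩
    rw [show ((2 * m : ℕ) : ℝ) * (π / 2) = m * π by push_cast; ring, sin_nat_mul_pi, Rat.cast_zero]
  · refine ⟨(-1) ^ m, ?_⟩
    rw [show ((2 * m + 1 : ℕ) : ℝ) * (π / 2) = m * π + π / 2 by push_cast; ring, sin_add_pi_div_two,
      cos_nat_mul_pi]
    push_cast; rfl

theorem tanMulSinPrimitive_pi_div_four {N : ℕ} (hN : 0 < N) :
    ∃ q : ℚ, tanMulSinPrimitive N (π / 4) = q + (-1) ^ (N + 1) * (π / 4) := by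
  obtain ⟨N, rfl⟩ := Nat.exists_eq_add_of_lt hN
  induction N with
  | zero =>
    refine ⟨-1 / 2, ?_⟩
    rw [zero_add, tanMulSinPrimitive, show 2 * (π / 4) = π / 2 by ring, sin_pi_div_two]
    push_cast; ring
  | succ N ih =>
    obtain ⟨q, hq⟩ := ih (Nat.succ_pos _)
    obtain ⟨q₁, hq₁⟩ := exists_rat_sin_nat_mul_pi_div_two (N + 1)
    obtain ⟨q₂, hq₂⟩ := exists_rat_sin_nat_mul_pi_div_two (N + 2)
    refine ⟨q₁ / (2 * (N + 1)) - q₂ / (2 * (N + 2)) - q, ?_⟩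
    simp only [zero_add] at hq ⊢
    rw [tanMulSinPrimitive, hq, show 2 * ((N : ℝ) + 1) * (π / 4) = ((N + 1 : ℕ) : ℝ) * (π / 2) by
      push_cast; ring, show 2 * ((N : ℝ) + 2) * (π / 4) = ((N + 2 : ℕ) : ℝ) * (π / 2) by
      push_cast; ring, hq₁, hq₂]
    push_cast; ring

theorem integral_Fj_nonzero (j : ℕ) (hj : 0 < j) :
    ∃ r : ℚ,
      (∫ x in (0:ℝ)..1, ∑ m ∈ Finset.range (2 * j),
          (-1 : ℝ) ^ m * (Nat.choose (4 * j) (2 * m + 1)) *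
            x ^ (2 * m + 2) / (x ^ 2 + 1) ^ (2 * j + 1))
        = (r : ℝ) - π / 4 ∧
      (∫ x in (0:ℝ)..1, ∑ m ∈ Finset.range (2 * j),
          (-1 : ℝ) ^ m * (Nat.choose (4 * j) (2 * m + 1)) *
            x ^ (2 * m + 2) / (x ^ 2 + 1) ^ (2 * j + 1)) ≠ 0 := by
  obtain ⟨q, hq⟩ := tanMulSinPrimitive_pi_div_four (by omega : 0 < 2 * j)
  have h_cont : Continuous fun x : ℝ => x * sin (2 * (2 * j : ℕ) * arctan x) / (1 + x ^ 2) :=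
    Continuous.div (by fun_prop) (by fun_prop) fun x => by positivity
  have h_integral : ∫ x in (0:ℝ)..1, ∑ m ∈ Finset.range (2 * j),
      (-1 : ℝ) ^ m * (Nat.choose (4 * j) (2 * m + 1)) * x ^ (2 * m + 2) / (x ^ 2 + 1) ^ (2 * j + 1)
        = q - π / 4 := by
    rw [show 4 * j = 2 * (2 * j) by ring]
    simp only [sum_choose_odd_mul_pow_div_eq]
    rw [integral_eq_sub_of_hasDerivAt
      (fun x _ => hasDerivAt_tanMulSinPrimitive_arctan _ x) (h_cont.intervalIntegrable 0 1),
      arctan_one, arctan_zero, tanMulSinPrimitive_zero_right, hq, pow_succ, pow_mul]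
    ring
  refine ⟨q, h_integral, ?_⟩
  rw [h_integral, sub_ne_zero]
  intro h
  exact irrational_pi ⟨4 * q, by push_cast; linarith⟩
end

section
/- For j ≥ 1, in polar coordinates, ∫_E conj(w)^{2j-1}/w^{2j+1} dw = ∫_1^{√2} ∫_{θ(r)}^{π/2 - θ(r)} e^{-4ijθ} dθ (dr/r), where E = {w ∈ ([-1,1]²) \ D(0,1) : Re w > 0, Im w > 0} and θ(r) = arccos(1/r); consequently the real integral equals (−1/(2j)) ∫_1^{√2} sin(4j θ(r)) dr/r and the imaginary part vanishes after symmetrization. -/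
/-!
In polar coordinates `w = r e^{iθ}` the integrand times the Jacobian `r` is `e^{-4ijθ} / r`.
The constraints `Re w ≤ 1` and `Im w ≤ 1` read `cos θ ≤ 1/r` and `sin θ ≤ 1/r`, so off the null
set `r = 1` the region `E` becomes `1 < r ≤ √2`, `θ(r) ≤ θ ≤ π/2 - θ(r)` with `θ(r) = arccos (1/r)`,
and Fubini gives the iterated integral. Since `e^{-4ijθ}` has period `π/2`, the inner integral is
`(e^{4ijθ(r)} - e^{-4ijθ(r)}) / (-4ij) = -sin (4jθ(r)) / (2j)`.
-/

open MeasureTheory Set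

section Fiberwise

variable {α β E : Type*} [MeasurableSpace α] [MeasurableSpace β] {μ : Measure α} {ν : Measure β}
  [SFinite μ] [SFinite ν] [NormedAddCommGroup E] [NormedSpace ℝ E]

theorem setIntegral_prod_of_fibers {s : Set α} {t : α → Set β} {f : α × β → E}
    (hs : MeasurableSet s) (hT : MeasurableSet {p : α × β | p.1 ∈ s ∧ p.2 ∈ t p.1})
    (hf : IntegrableOn f {p | p.1 ∈ s ∧ p.2 ∈ t p.1} (μ.prod ν)) :
    ∫ p in {p | p.1 ∈ s ∧ p.2 ∈ t p.1}, f p ∂μ.prod ν = ∫ x in s, ∫ y in t x, f (x, y) ∂ν ∂μ := by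
  classical
  rw [← integral_indicator hT, integral_prod _ (hf.integrable_indicator hT),
    ← setIntegral_eq_integral_of_forall_compl_eq_zero (s := s) fun x hx ↦ by
      simp [hx]]
  refine setIntegral_congr_fun hs fun x hx ↦ ?_
  have ht : MeasurableSet (t x) := by simpa [hx] using measurable_prodMk_left hT (x := x)
  rw [← integral_indicator ht]
  simp [indicator_apply, hx]

end Fiberwise

theorem Complex.setIntegral_comp_polarCoord_symm {E : Type*} [NormedAddCommGroup E]
    [NormedSpace ℝ E] {s : Set ℂ} {t : Set (ℝ × ℝ)} (hs : MeasurableSet s) (ht : MeasurableSet t)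
    (ht_target : t ⊆ polarCoord.target)
    (hst : ∀ᵐ p, p ∈ polarCoord.target → (Complex.polarCoord.symm p ∈ s ↔ p ∈ t)) (f : ℂ → E) :
    ∫ z in s, f z = ∫ p in t, p.1 • f (Complex.polarCoord.symm p) := by
  classical
  rw [← integral_indicator hs, ← Complex.integral_comp_polarCoord_symm,
    ← inter_eq_right.2 ht_target, ← setIntegral_indicator ht]
  refine setIntegral_congr_ae polarCoord.open_target.measurableSet ?_
  filter_upwards [hst] with p hst hp
  rw [indicator_apply, indicator_apply, hst hp]
  split_ifs <;> simp only [smul_zero]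

namespace Real

theorem arccos_le_iff_cos_le {a θ : ℝ} (ha : a ∈ Icc (-1) 1) (hθ : θ ∈ Icc 0 π) :
    arccos a ≤ θ ↔ cos θ ≤ a := by
  conv_lhs => rw [← arccos_cos hθ.1 hθ.2]
  exact strictAntiOn_arccos.le_iff_ge ha ⟨neg_one_le_cos θ, cos_le_one θ⟩

theorem mul_cos_le_one_iff {r θ : ℝ} (hr : 1 ≤ r) (hθ : θ ∈ Icc 0 π) :
    r * cos θ ≤ 1 ↔ arccos (1 / r) ≤ θ := by
  have h1r : 1 / r ∈ Icc (-1) 1 :=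
    ⟨by linarith [one_div_pos.2 (zero_lt_one.trans_le hr)], div_le_one_of_le₀ hr (by linarith)⟩
  rw [arccos_le_iff_cos_le h1r hθ, le_div_iff₀ (by linarith), mul_comm]

theorem mul_sin_le_one_iff {r θ : ℝ} (hr : 1 ≤ r) (hθ : θ ∈ Icc (-(π / 2)) (π / 2)) :
    r * sin θ ≤ 1 ↔ θ ≤ π / 2 - arccos (1 / r) := by
  rw [← cos_pi_div_two_sub, mul_cos_le_one_iff hr ⟨by linarith [hθ.2], by linarith [hθ.1]⟩,
    le_sub_comm]

theorem arccos_one_div_le_pi_div_two_sub_iff {r : ℝ} (hr : 0 < r) :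
    arccos (1 / r) ≤ π / 2 - arccos (1 / r) ↔ r ≤ √2 := by
  rw [← one_div_le_one_div (by positivity) hr, ← sqrt_div_self', ← arccos_le_pi_div_four]
  constructor <;> intro <;> linarith

theorem cos_pos_and_sin_pos_iff {θ : ℝ} (hθ : θ ∈ Ioo (-π) π) :
    0 < cos θ ∧ 0 < sin θ ↔ θ ∈ Ioo 0 (π / 2) := by
  refine ⟨fun ⟨hcos, hsin⟩ ↦ ⟨?_, ?_⟩, fun h ↦ ⟨?_, ?_⟩⟩
  · by_contra! h
    exact hsin.not_ge (sin_nonpos_of_nonpos_of_neg_pi_le h hθ.1.le)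
  · by_contra! h
    exact hcos.not_ge (cos_nonpos_of_pi_div_two_le_of_le h (by linarith [hθ.2]))
  · exact cos_pos_of_mem_Ioo ⟨by linarith [h.1, pi_pos], h.2⟩
  · exact sin_pos_of_pos_of_lt_pi h.1 (by linarith [h.2, pi_pos])

end Real

open Complex Real intervalIntegral
open scoped ComplexConjugate

theorem Complex.polarCoord_symm_eq_ofReal_mul_exp (p : ℝ × ℝ) :
    Complex.polarCoord.symm p = p.1 * exp (p.2 * I) := by
  rw [Complex.polarCoord_symm_apply, exp_mul_I, ← ofReal_cos, ← ofReal_sin]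

theorem Complex.conj_pow_div_pow_polarCoord_symm (m n : ℕ) (p : ℝ × ℝ) :
    conj (Complex.polarCoord.symm p) ^ m / Complex.polarCoord.symm p ^ n
      = (p.1 : ℂ) ^ m / (p.1 : ℂ) ^ n * exp (-((m + n) * p.2) * I) := by
  rw [polarCoord_symm_eq_ofReal_mul_exp, map_mul, conj_ofReal, ← exp_conj, map_mul,
    conj_ofReal, conj_I, mul_pow, mul_pow, ← Complex.exp_nat_mul, ← Complex.exp_nat_mul,
    mul_div_mul_comm, ← Complex.exp_sub]
  congr 2
  ring

theorem Complex.smul_conj_pow_div_pow_polarCoord_symm {j : ℕ} (hj : 1 ≤ j) {p : ℝ × ℝ}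
    (hp : p.1 ≠ 0) :
    p.1 • (conj (Complex.polarCoord.symm p) ^ (2 * j - 1) / Complex.polarCoord.symm p ^ (2 * j + 1))
      = exp (-(4 * j * p.2) * I) / p.1 := by
  obtain ⟨k, rfl⟩ : ∃ k, j = k + 1 := ⟨j - 1, by omega⟩
  have hr : (p.1 : ℂ) ≠ 0 := ofReal_ne_zero.2 hp
  rw [conj_pow_div_pow_polarCoord_symm, real_smul, show 2 * (k + 1) - 1 = 2 * k + 1 by omega]
  push_cast
  field_simp
  ring_nf

theorem integral_exp_neg_four_mul_mul_I_symm {j : ℕ} (hj : j ≠ 0) (α : ℝ) :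
    ∫ θ in α..(π / 2 - α), exp (-(4 * j * θ) * I)
      = ((-Real.sin (4 * j * α) / (2 * j) : ℝ) : ℂ) := by
  have hc : -(4 * j) * I ≠ 0 := by simp [hj]
  -- `exp (-4jθi)` has period `π / 2`
  have hper : exp (-(4 * j) * I * ↑(π / 2 - α)) = exp (↑(4 * j * α) * I) := by
    rw [← mul_one (exp (_ * I)), ← exp_int_mul_two_pi_mul_I (-j), ← Complex.exp_add]
    congr 1
    push_cast
    ring
  simp_rw [show ∀ θ : ℝ, -(4 * (j : ℂ) * θ) * I = -(4 * j) * I * θ by intro θ; ring]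
  rw [integral_exp_mul_complex hc, hper, show -(4 * (j : ℂ)) * I * α = -↑(4 * j * α) * I by
    push_cast; ring, div_eq_iff hc]
  have hj' : (j : ℂ) ≠ 0 := Nat.cast_ne_zero.2 hj
  push_cast
  field_simp
  rw [← neg_mul]
  linear_combination (-2 * I) * two_sin (4 * j * α : ℂ)
    + 2 * (exp (4 * j * α * I) - exp (-(4 * j * α) * I)) * I_sq

def cornerRegion : Set ℂ :=
  {w : ℂ | (|w.re| ≤ 1 ∧ |w.im| ≤ 1) ∧ w ∉ Metric.ball (0 : ℂ) 1 ∧ 0 < w.re ∧ 0 < w.im}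

def cornerRegionPolar : Set (ℝ × ℝ) :=
  {p | p.1 ∈ Ioc 1 √2 ∧ p.2 ∈ Icc (arccos (1 / p.1)) (π / 2 - arccos (1 / p.1))}

theorem measurableSet_cornerRegion : MeasurableSet cornerRegion := by
  unfold cornerRegion; measurability

theorem measurableSet_cornerRegionPolar : MeasurableSet cornerRegionPolar := by
  unfold cornerRegionPolar; measurability

theorem cornerRegionPolar_subset_Icc_prod_Icc :
    cornerRegionPolar ⊆ Icc 1 √2 ×ˢ Icc 0 (π / 2) := fun p ⟨hr, hθ⟩ ↦
  ⟨Ioc_subset_Icc_self hr, by linarith [hθ.1, arccos_nonneg (1 / p.1)],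
    by linarith [hθ.2, arccos_nonneg (1 / p.1)]⟩

theorem cornerRegionPolar_subset_target : cornerRegionPolar ⊆ polarCoord.target := by
  refine cornerRegionPolar_subset_Icc_prod_Icc.trans fun p ⟨hr, hθ⟩ ↦ ⟨?_, ?_, ?_⟩
  · exact zero_lt_one.trans_le hr.1
  · linarith [hθ.1, pi_pos]
  · linarith [hθ.2, pi_pos]

-- On the arc `r = 1` the polar region contains `θ = 0` and `θ = π / 2`, which `cornerRegion` omits.
theorem polarCoord_symm_mem_cornerRegion_iff {p : ℝ × ℝ} (hp : p ∈ polarCoord.target)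
    (hp1 : p.1 ≠ 1) : Complex.polarCoord.symm p ∈ cornerRegion ↔ p ∈ cornerRegionPolar := by
  obtain ⟨r, θ⟩ := p
  obtain ⟨hr, hθ⟩ : 0 < r ∧ θ ∈ Ioo (-π) π := by simpa [polarCoord_target] using hp
  have hre : (Complex.polarCoord.symm (r, θ)).re = r * Real.cos θ := by simp [cos_ofReal_re]
  have him : (Complex.polarCoord.symm (r, θ)).im = r * Real.sin θ := by simp [sin_ofReal_re]
  simp only [cornerRegion, cornerRegionPolar, mem_ofPred_eq, Metric.mem_ball, dist_zero_right,
    norm_polarCoord_symm, hre, him, abs_of_pos hr, not_lt, mul_pos_iff_of_pos_left hr]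
  constructor
  · rintro ⟨⟨hc, hs⟩, h1, hcos, hsin⟩
    obtain ⟨hθ0, hθπ⟩ := (cos_pos_and_sin_pos_iff hθ).1 ⟨hcos, hsin⟩
    rw [abs_of_pos (mul_pos hr hcos), mul_cos_le_one_iff h1 ⟨hθ0.le, by linarith⟩] at hc
    rw [abs_of_pos (mul_pos hr hsin), mul_sin_le_one_iff h1 ⟨by linarith, hθπ.le⟩] at hs
    exact ⟨⟨h1.lt_of_ne' hp1, (arccos_one_div_le_pi_div_two_sub_iff hr).1 (hc.trans hs)⟩, hc, hs⟩
  · rintro ⟨⟨h1, -⟩, hθ1, hθ2⟩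
    have hα : 0 < arccos (1 / r) := arccos_pos.2 ((div_lt_one hr).2 h1)
    have hθ' : θ ∈ Ioo 0 (π / 2) := ⟨by linarith, by linarith⟩
    obtain ⟨hcos, hsin⟩ := (cos_pos_and_sin_pos_iff hθ).2 hθ'
    refine ⟨⟨?_, ?_⟩, h1.le, hcos, hsin⟩
    · rwa [abs_of_pos (mul_pos hr hcos), mul_cos_le_one_iff h1.le ⟨hθ'.1.le, by linarith⟩]
    · rwa [abs_of_pos (mul_pos hr hsin), mul_sin_le_one_iff h1.le ⟨by linarith, hθ'.2.le⟩]

theorem integrableOn_cornerRegionPolar {E : Type*} [NormedAddCommGroup E] {f : ℝ × ℝ → E}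
    (hf : ContinuousOn f (Icc 1 √2 ×ˢ Icc 0 (π / 2))) : IntegrableOn f cornerRegionPolar :=
  (hf.integrableOn_compact (isCompact_Icc.prod isCompact_Icc)).mono_set
    cornerRegionPolar_subset_Icc_prod_Icc

theorem setIntegral_cornerRegion_eq {E : Type*} [NormedAddCommGroup E] [NormedSpace ℝ E]
    (f : ℂ → E) :
    ∫ z in cornerRegion, f z = ∫ p in cornerRegionPolar, p.1 • f (Complex.polarCoord.symm p) :=
  Complex.setIntegral_comp_polarCoord_symm measurableSet_cornerRegion
    measurableSet_cornerRegionPolar cornerRegionPolar_subset_target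
    (by filter_upwards [Measure.quasiMeasurePreserving_fst.ae (volume.ae_ne 1)] with p hp1 hp
      using polarCoord_symm_mem_cornerRegion_iff hp hp1) f

theorem setIntegral_cornerRegionPolar_eq {E : Type*} [NormedAddCommGroup E] [NormedSpace ℝ E]
    {f : ℝ × ℝ → E} (hf : IntegrableOn f cornerRegionPolar) :
    ∫ p in cornerRegionPolar, f p
      = ∫ r in (1 : ℝ)..√2, ∫ θ in arccos (1 / r)..(π / 2 - arccos (1 / r)), f (r, θ) := by
  rw [integral_of_le (one_le_sqrt.2 one_le_two)]
  refine (setIntegral_prod_of_fibers (t := fun r ↦ Icc (arccos (1 / r)) (π / 2 - arccos (1 / r)))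
    measurableSet_Ioc measurableSet_cornerRegionPolar hf).trans
    (setIntegral_congr_fun measurableSet_Ioc fun r hr ↦ ?_)
  rw [integral_Icc_eq_integral_Ioc, ← integral_of_le
    ((arccos_one_div_le_pi_div_two_sub_iff (zero_lt_one.trans hr.1)).2 hr.2)]

theorem integral_E_polar_coordinates (j : ℕ) (hj : 1 ≤ j)
    (E : Set ℂ)
    (hE : E = {w : ℂ | (|w.re| ≤ 1 ∧ |w.im| ≤ 1) ∧ w ∉ Metric.ball (0:ℂ) 1 ∧
      0 < w.re ∧ 0 < w.im}) :
    (∫ w in E, (starRingEnd ℂ w) ^ (2 * j - 1) / w ^ (2 * j + 1) ∂volume)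
      = (∫ r in (1:ℝ)..Real.sqrt 2,
          (∫ θ in Real.arccos (1 / r)..(π / 2 - Real.arccos (1 / r)),
            Complex.exp (-(4 * j * θ) * Complex.I)) / (r : ℂ)) ∧
    (∫ w in E, (starRingEnd ℂ w) ^ (2 * j - 1) / w ^ (2 * j + 1) ∂volume)
      = ((-1 / (2 * j) *
          ∫ r in (1:ℝ)..Real.sqrt 2, Real.sin (4 * j * Real.arccos (1 / r)) / r : ℝ) : ℂ) := by
  have hiterated : ∫ w in E, conj w ^ (2 * j - 1) / w ^ (2 * j + 1)
      = ∫ r in (1 : ℝ)..√2, (∫ θ in arccos (1 / r)..(π / 2 - arccos (1 / r)),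
          exp (-(4 * j * θ) * I)) / r := by
    have hcontinuous : ContinuousOn (fun p : ℝ × ℝ ↦ exp (-(4 * j * p.2) * I) / p.1)
        (Icc 1 √2 ×ˢ Icc 0 (π / 2)) :=
      ContinuousOn.div (by fun_prop) (by fun_prop) fun p hp ↦
        ofReal_ne_zero.2 (zero_lt_one.trans_le hp.1.1).ne'
    rw [hE, ← cornerRegion, setIntegral_cornerRegion_eq,
      setIntegral_congr_fun measurableSet_cornerRegionPolar fun p hp ↦
        smul_conj_pow_div_pow_polarCoord_symm hj (cornerRegionPolar_subset_target hp).1.ne',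
      setIntegral_cornerRegionPolar_eq (integrableOn_cornerRegionPolar hcontinuous)]
    simp_rw [intervalIntegral.integral_div]
  refine ⟨hiterated, hiterated.trans ?_⟩
  simp_rw [integral_exp_neg_four_mul_mul_I_symm (by omega : j ≠ 0), ← ofReal_div,
    intervalIntegral.integral_ofReal, ← intervalIntegral.integral_const_mul]
  congr 2 with r
  ring
end

section
/- Let α_k ∈ ℂ be a nonzero constant and k a positive even integer. Then there is no constant C and integer j ≥ 1 such that |∫_{|z|>3} (z^{k-1}/conj(z)^{k+1}) G(z) dz| ≤ C · M^j G(0) for all G ∈ L²(ℂ) with compact support: indeed, for every C > 0 there exists G with 0 ≤ G ≤ 1 compactly supported such that the left-hand side exceeds C while M^j G(0) ≤ 1. -/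
open MeasureTheory Metric Complex

/-- Hardy–Littlewood maximal operator on `ℂ ≅ ℝ²` (real-valued, via averages). -/
noncomputable def maximalR (f : ℂ → ℝ) : ℂ → ℝ := fun x =>
  ⨆ r : {r : ℝ // 0 < r}, ⨍ y in ball x r.1, |f y| ∂volume

/-!
For `k ≥ 1` the kernel is `z ^ (k - 1) / conj z ^ (k + 1) = e^{2ikθ} / r²` in polar coordinates
`z = r e^{iθ}`. On the sector `|θ| < 1 / (2k)` the phase has real part at least `1 / 2`, so there
is no cancellation: against the indicator of `{3 < r < R, |θ| < 1 / (2k)}` the integral has real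
part at least `log (R / 3) / (2k)`, unbounded in `R`, while every iterated maximal function of an
indicator stays below `1`.
-/

open Set Filter
open scoped ENNReal

section Average

variable {α : Type*} [MeasurableSpace α] {μ : Measure α} {s : Set α} {f : α → ℝ} {c : ℝ}

theorem setAverage_abs_mem_Icc (hf : ∀ x, |f x| ≤ c) (hs₀ : μ s ≠ 0) (hs : μ s ≠ ∞) :
    ⨍ x in s, |f x| ∂μ ∈ Icc 0 c := by
  have hpos : 0 < μ.real s := ENNReal.toReal_pos hs₀ hs
  rw [setAverage_eq, smul_eq_mul]
  refine ⟨mul_nonneg (inv_nonneg.2 hpos.le) (integral_nonneg fun x => abs_nonneg _), ?_⟩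
  have hint : ‖∫ x in s, |f x| ∂μ‖ ≤ c * μ.real s :=
    norm_setIntegral_le_of_norm_le_const hs.lt_top fun x _ => by simpa using hf x
  calc (μ.real s)⁻¹ * ∫ x in s, |f x| ∂μ ≤ (μ.real s)⁻¹ * (c * μ.real s) := by
        gcongr; exact (le_abs_self _).trans hint
    _ = c := by field_simp

end Average

theorem abs_maximalR_le {f : ℂ → ℝ} {c : ℝ} (hf : ∀ z, |f z| ≤ c) (z : ℂ) :
    |maximalR f z| ≤ c := by
  have havg (r : {r : ℝ // 0 < r}) : ⨍ y in ball z r.1, |f y| ∈ Icc 0 c :=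
    setAverage_abs_mem_Icc hf (measure_ball_pos volume z r.2).ne' measure_ball_lt_top.ne
  have hbdd : BddAbove (range fun r : {r : ℝ // 0 < r} => ⨍ y in ball z r.1, |f y|) :=
    ⟨c, forall_mem_range.2 fun r => (havg r).2⟩
  rw [maximalR, abs_of_nonneg ((havg ⟨1, one_pos⟩).1.trans (le_ciSup hbdd _))]
  exact ciSup_le fun r => (havg r).2

theorem abs_maximalR_iterate_le {f : ℂ → ℝ} {c : ℝ} (hf : ∀ z, |f z| ≤ c) (j : ℕ) (z : ℂ) :
    |maximalR^[j] f z| ≤ c := by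
  induction j generalizing z with
  | zero => exact hf z
  | succ j ih => rw [Function.iterate_succ_apply']; exact abs_maximalR_le ih z

def annularSector (ρ R a : ℝ) : Set ℂ := {z | ‖z‖ ∈ Ioo ρ R ∧ arg z ∈ Ioo (-a) a}

section AnnularSector

variable {ρ R a : ℝ}

theorem measurableSet_annularSector : MeasurableSet (annularSector ρ R a) :=
  (measurableSet_Ioo.preimage continuous_norm.measurable).inter
    (measurableSet_Ioo.preimage measurable_arg)

theorem annularSector_subset_ball : annularSector ρ R a ⊆ ball 0 R := fun z hz => by
  simpa using hz.1.2

theorem annularSector_subset_norm_gt : annularSector ρ R a ⊆ {z | ρ < ‖z‖} := fun _ hz => hz.1.1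

theorem volume_annularSector_ne_top : volume (annularSector ρ R a) ≠ ∞ :=
  ((measure_mono annularSector_subset_ball).trans_lt measure_ball_lt_top).ne

theorem polarCoord_symm_mem_annularSector_iff {p : ℝ × ℝ} (hp : p ∈ polarCoord.target) :
    Complex.polarCoord.symm p ∈ annularSector ρ R a ↔ p ∈ Ioo ρ R ×ˢ Ioo (-a) a := by
  obtain ⟨hr : 0 < p.1, hθ : p.2 ∈ Ioo (-Real.pi) Real.pi⟩ := hp
  have harg : arg (Complex.polarCoord.symm p) = p.2 := by
    rw [Complex.polarCoord_symm_apply, ofReal_cos, ofReal_sin, arg_real_mul _ hr,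
      arg_cos_add_sin_mul_I ⟨hθ.1, hθ.2.le⟩]
  simp only [annularSector, mem_ofPred_eq, harg, norm_polarCoord_symm, abs_of_pos hr, mem_prod]

theorem setIntegral_annularSector {E : Type*} [NormedAddCommGroup E] [NormedSpace ℝ E]
    (f : ℂ → E) (hρ : 0 ≤ ρ) (ha : a ≤ Real.pi) :
    ∫ z in annularSector ρ R a, f z =
      ∫ p in Ioo ρ R ×ˢ Ioo (-a) a, p.1 • f (Complex.polarCoord.symm p) := by
  have hsub : Ioo ρ R ×ˢ Ioo (-a) a ⊆ polarCoord.target := by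
    rw [polarCoord_target]
    exact prod_mono (Ioo_subset_Ioi_self.trans (Ioi_subset_Ioi hρ))
      (Ioo_subset_Ioo (neg_le_neg ha) ha)
  have hind : EqOn (fun p : ℝ × ℝ => p.1 • (annularSector ρ R a).indicator f
      (Complex.polarCoord.symm p)) ((Ioo ρ R ×ˢ Ioo (-a) a).indicator fun p =>
      p.1 • f (Complex.polarCoord.symm p)) polarCoord.target := fun p hp => by
    by_cases hpS : p ∈ Ioo ρ R ×ˢ Ioo (-a) a
    · simp only [indicator_of_mem hpS, indicator_of_mem
        ((polarCoord_symm_mem_annularSector_iff hp).2 hpS)]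
    · simp only [indicator_of_notMem hpS, indicator_of_notMem
        ((polarCoord_symm_mem_annularSector_iff hp).not.2 hpS), smul_zero]
  rw [← integral_indicator measurableSet_annularSector,
    ← Complex.integral_comp_polarCoord_symm, setIntegral_congr_fun
      polarCoord.open_target.measurableSet hind, setIntegral_indicator
      (measurableSet_Ioo.prod measurableSet_Ioo), inter_eq_self_of_subset_right hsub]

theorem setIntegral_annularSector_radial (h : ℝ → ℝ) (hρ : 0 ≤ ρ) (ha₀ : 0 ≤ a)
    (ha : a ≤ Real.pi) :
    ∫ z in annularSector ρ R a, h ‖z‖ = 2 * a * ∫ r in Ioo ρ R, r * h r := by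
  have hpolar : EqOn (fun p : ℝ × ℝ => p.1 • h ‖Complex.polarCoord.symm p‖)
      (fun p => p.1 * h p.1 * 1) (Ioo ρ R ×ˢ Ioo (-a) a) := fun p hp => by
    simp [abs_of_pos (hρ.trans_lt hp.1.1)]
  rw [setIntegral_annularSector _ hρ ha,
    setIntegral_congr_fun (measurableSet_Ioo.prod measurableSet_Ioo) hpolar,
    Measure.volume_eq_prod, ← Measure.prod_restrict,
    integral_prod_mul (fun r => r * h r) fun _ => (1 : ℝ), setIntegral_const,
    Real.volume_real_Ioo_of_le (by linarith)]
  simp only [smul_eq_mul]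
  ring

end AnnularSector

noncomputable def powKernel (k : ℕ) (z : ℂ) : ℂ := z ^ (k - 1) / (starRingEnd ℂ z) ^ (k + 1)

section PowKernel

variable {k : ℕ} {z : ℂ} {ρ R : ℝ}

theorem powKernel_eq (hk : 0 < k) (hz : z ≠ 0) :
    powKernel k z = exp (↑(2 * k * arg z) * I) / ↑(‖z‖ ^ 2) := by
  obtain ⟨n, rfl⟩ : ∃ n, k = n + 1 := ⟨k - 1, by omega⟩
  have hpolar := (norm_mul_exp_arg_mul_I z).symm
  have hexp : exp (↑(2 * (n + 1 : ℕ) * arg z) * I) =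
      exp (arg z * I) ^ n * exp (arg z * I) ^ (n + 1 + 1) := by
    rw [← exp_nat_mul, ← exp_nat_mul, ← exp_add]; push_cast; ring_nf
  have hconj : starRingEnd ℂ z = ‖z‖ * (exp (arg z * I))⁻¹ := by
    conv_lhs => rw [hpolar]
    rw [map_mul, conj_ofReal, ← exp_conj, map_mul, conj_ofReal, conj_I, mul_neg, exp_neg]
  have hr : (‖z‖ : ℂ) ≠ 0 := ofReal_ne_zero.2 (norm_ne_zero_iff.2 hz)
  have he : exp (arg z * I) ≠ 0 := exp_ne_zero _
  rw [powKernel, Nat.add_sub_cancel, hconj, hexp, ofReal_pow]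
  generalize (‖z‖ : ℂ) = r at hr hpolar ⊢
  generalize exp (arg z * I) = e at he hpolar ⊢
  subst hpolar
  rw [mul_pow, mul_pow, inv_pow]
  field_simp
  ring

theorem norm_powKernel (hk : 0 < k) (hz : z ≠ 0) : ‖powKernel k z‖ = (‖z‖ ^ 2)⁻¹ := by
  rw [powKernel_eq hk hz, norm_div, norm_exp_ofReal_mul_I, norm_real, Real.norm_of_nonneg
    (by positivity), one_div]

theorem re_powKernel (hk : 0 < k) (hz : z ≠ 0) :
    (powKernel k z).re = Real.cos (2 * k * arg z) / ‖z‖ ^ 2 := by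
  rw [powKernel_eq hk hz, div_ofReal_re, exp_ofReal_mul_I_re]

theorem measurable_powKernel : Measurable (powKernel k) := by
  unfold powKernel; fun_prop

theorem integrableOn_powKernel_annularSector (hk : 0 < k) (hρ : 0 < ρ) (a : ℝ) :
    IntegrableOn (powKernel k) (annularSector ρ R a) := by
  refine Measure.integrableOn_of_bounded volume_annularSector_ne_top
    measurable_powKernel.aestronglyMeasurable (M := (ρ ^ 2)⁻¹)
    ((ae_restrict_iff' measurableSet_annularSector).2 (Eventually.of_forall fun z hz => ?_))
  have hρz : ρ < ‖z‖ := hz.1.1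
  rw [norm_powKernel hk (norm_pos_iff.1 (hρ.trans hρz))]
  gcongr

theorem half_le_cos_of_abs_le_one {x : ℝ} (hx : |x| ≤ 1) : 1 / 2 ≤ Real.cos x := by
  nlinarith [Real.one_sub_sq_div_two_le_cos (x := x), sq_abs x, abs_nonneg x]

theorem inv_two_mul_norm_sq_le_re_powKernel (hk : 0 < k) (hρ : 0 ≤ ρ)
    (hz : z ∈ annularSector ρ R (2 * k)⁻¹) : (2 * ‖z‖ ^ 2)⁻¹ ≤ (powKernel k z).re := by
  have hz₀ : 0 < ‖z‖ := hρ.trans_lt hz.1.1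
  have hcos : 1 / 2 ≤ Real.cos (2 * k * arg z) := by
    refine half_le_cos_of_abs_le_one ?_
    have : |arg z| ≤ (2 * k : ℝ)⁻¹ := abs_le.2 ⟨hz.2.1.le, hz.2.2.le⟩
    rw [abs_mul, abs_of_pos (by positivity)]
    calc 2 * k * |arg z| ≤ 2 * k * (2 * k : ℝ)⁻¹ := by gcongr
      _ = 1 := mul_inv_cancel₀ (by positivity)
  rw [re_powKernel hk (norm_pos_iff.1 hz₀), mul_inv, div_eq_mul_inv]
  gcongr
  linarith

theorem log_div_le_re_setIntegral_powKernel (hk : 0 < k) (hρ : 0 < ρ) (hρR : ρ ≤ R) :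
    Real.log (R / ρ) / (2 * k) ≤ (∫ z in annularSector ρ R (2 * k)⁻¹, powKernel k z).re := by
  have hradial : ∫ r in Ioo ρ R, r * (2 * r ^ 2)⁻¹ = 2⁻¹ * Real.log (R / ρ) := by
    rw [setIntegral_congr_fun measurableSet_Ioo fun r (hr : r ∈ Ioo ρ R) =>
        show r * (2 * r ^ 2)⁻¹ = 2⁻¹ * r⁻¹ by field_simp [(hρ.trans hr.1).ne'],
      integral_const_mul, ← integral_Ioc_eq_integral_Ioo, ← intervalIntegral.integral_of_le hρR,
      integral_inv_of_pos hρ (hρ.trans_le hρR)]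
  have ha : (2 * k : ℝ)⁻¹ ≤ Real.pi := by
    calc (2 * k : ℝ)⁻¹ ≤ 1 := inv_le_one_of_one_le₀ (by norm_cast; omega)
      _ ≤ Real.pi := by linarith [Real.pi_gt_three]
  calc Real.log (R / ρ) / (2 * k)
      = ∫ z in annularSector ρ R (2 * k)⁻¹, (2 * ‖z‖ ^ 2)⁻¹ := by
        rw [setIntegral_annularSector_radial (fun r => (2 * r ^ 2)⁻¹) hρ.le (by positivity) ha,
          hradial]
        field_simp
    _ ≤ ∫ z in annularSector ρ R (2 * k)⁻¹, (powKernel k z).re :=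
        integral_mono_of_nonneg (Eventually.of_forall fun z => by positivity)
          (integrableOn_powKernel_annularSector hk hρ _).re
          ((ae_restrict_iff' measurableSet_annularSector).2 (Eventually.of_forall fun z hz =>
            inv_two_mul_norm_sq_le_re_powKernel hk hρ.le hz))
    _ = (∫ z in annularSector ρ R (2 * k)⁻¹, powKernel k z).re :=
        integral_re (integrableOn_powKernel_annularSector hk hρ _)

theorem tendsto_re_setIntegral_powKernel_annularSector (hk : 0 < k) (hρ : 0 < ρ) :
    Tendsto (fun R => (∫ z in annularSector ρ R (2 * k)⁻¹, powKernel k z).re) atTop atTop :=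
  tendsto_atTop_mono' _
    ((eventually_ge_atTop ρ).mono fun _ hR => log_div_le_re_setIntegral_powKernel hk hρ hR)
    ((Real.tendsto_log_atTop.comp (tendsto_id.atTop_div_const hρ)).atTop_div_const
      (by positivity))

end PowKernel

theorem setIntegral_mul_indicator_one {α : Type*} [MeasurableSpace α] {μ : Measure α}
    {s t : Set α} (hs : MeasurableSet s) (hst : s ⊆ t) (f : α → ℂ) :
    ∫ x in t, f x * ((s.indicator 1 x : ℝ) : ℂ) ∂μ = ∫ x in s, f x ∂μ := by
  have hind : (fun x => f x * ((s.indicator 1 x : ℝ) : ℂ)) = s.indicator f := by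
    funext x; by_cases hx : x ∈ s <;> simp [hx]
  rw [hind, setIntegral_indicator hs, inter_eq_self_of_subset_right hst]

theorem no_iterated_maximal_bound_even_general (k : ℕ) (hk : 0 < k) (j : ℕ) (C : ℝ) :
    ∃ G : ℂ → ℝ, MemLp G 2 volume ∧ HasCompactSupport G ∧
      (∀ z, 0 ≤ G z ∧ G z ≤ 1) ∧
      (maximalR^[j] G) 0 ≤ 1 ∧
      C < ‖∫ z in {z : ℂ | 3 < ‖z‖},
            (z ^ (k - 1) / (starRingEnd ℂ z) ^ (k + 1)) * (G z : ℂ) ∂volume‖ := by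
  obtain ⟨R, hR⟩ :=
    ((tendsto_re_setIntegral_powKernel_annularSector hk three_pos).eventually_gt_atTop C).exists
  set S := annularSector 3 R (2 * k)⁻¹
  set G : ℂ → ℝ := S.indicator 1
  have hG : ∀ z, 0 ≤ G z ∧ G z ≤ 1 := fun z => by
    by_cases hz : z ∈ S <;> simp [G, hz]
  have hGsupp : HasCompactSupport G :=
    HasCompactSupport.intro (isCompact_closedBall 0 R) fun z hz => indicator_of_notMem
      (fun hzS => hz (ball_subset_closedBall (annularSector_subset_ball hzS))) _
  refine ⟨G, memLp_indicator_const 2 measurableSet_annularSector 1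
    (Or.inr volume_annularSector_ne_top), hGsupp, hG, ?_, ?_⟩
  · exact (le_abs_self _).trans
      (abs_maximalR_iterate_le (fun z => abs_le.2 ⟨by linarith [(hG z).1], (hG z).2⟩) j 0)
  · calc C < (∫ z in S, powKernel k z).re := hR
      _ ≤ ‖∫ z in S, powKernel k z‖ := re_le_norm _
      _ = _ := by
        rw [← setIntegral_mul_indicator_one measurableSet_annularSector
          annularSector_subset_norm_gt]
        rfl

theorem no_iterated_maximal_bound_even (k : ℕ) (hk : 0 < k) (hkeven : Even k)
    (j : ℕ) (hj : 1 ≤ j) (C : ℝ) (hC : 0 < C) :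
    ∃ G : ℂ → ℝ, MemLp G 2 volume ∧ HasCompactSupport G ∧
      (∀ z, 0 ≤ G z ∧ G z ≤ 1) ∧
      (maximalR^[j] G) 0 ≤ 1 ∧
      C < ‖∫ z in {z : ℂ | 3 < ‖z‖},
            (z ^ (k - 1) / (starRingEnd ℂ z) ^ (k + 1)) * (G z : ℂ) ∂volume‖ :=
  no_iterated_maximal_bound_even_general k hk j C
end
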